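/- In the symmetric group S₈, the permutations σ₁ = (1 2 3 4 5), σ₂ = (3 6 8 5 4), σ₃ = (1 5 4 7 2), σ₄ = (2 7 4 8 6) each have cycle structure [1,1,1,5], satisfy σ₁·σ₂·σ₃·σ₄ = identity, and the subgroup they generate acts transitively on {1,…,8}. Hence there exists a transitive product-one tuple in S₈ of length 4 with ramification type [[1³,5]⁴]. -/

import Mathlib

/-- Cycle structure of a permutation of `Fin d`, including fixed points as 1-cycles. -/
def fullCycleType {d : ℕ} (σ : Equiv.Perm (Fin d)) : Multiset ℕ :=
  σ.cycleType + Multiset.replicate (d - σ.cycleType.sum) 1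

/-- Product of a list of permutations, composed left-to-right
(apply the first permutation first). -/
def seqProd {d : ℕ} (l : List (Equiv.Perm (Fin d))) : Equiv.Perm (Fin d) :=
  l.foldr (fun σ acc => σ.trans acc) (Equiv.refl (Fin d))


def σ1 : Equiv.Perm (Fin 8) := c[0, 1, 2, 3, 4]

def σ2 : Equiv.Perm (Fin 8) := c[2, 5, 7, 4, 3]

def σ3 : Equiv.Perm (Fin 8) := c[0, 4, 3, 6, 1]

def σ4 : Equiv.Perm (Fin 8) := c[1, 6, 3, 7, 5]

open Equiv

theorem fullCycleType_formPerm {d : ℕ} {l : List (Fin d)} (hl : l.Nodup) (hn : 2 ≤ l.length) :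
    fullCycleType l.formPerm = l.length ::ₘ Multiset.replicate (d - l.length) 1 := by
  have hsupp : l.formPerm.support.card = l.length := by
    rw [List.support_formPerm_of_nodup l hl fun x hx => by simp [hx] at hn,
      List.toFinset_card_of_nodup hl]
  rw [fullCycleType, (List.isCycle_formPerm hl hn).cycleType, hsupp]
  rfl

theorem fullCycleType_formPerm_of_length_eq_five {l : List (Fin 8)} (hl : l.Nodup)
    (h5 : l.length = 5) : fullCycleType l.formPerm = ({1, 1, 1, 5} : Multiset ℕ) := by
  rw [fullCycleType_formPerm hl (by omega), h5]
  decide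

theorem fullCycleType_σ1 : fullCycleType σ1 = ({1, 1, 1, 5} : Multiset ℕ) :=
  fullCycleType_formPerm_of_length_eq_five (by decide) rfl

theorem fullCycleType_σ2 : fullCycleType σ2 = ({1, 1, 1, 5} : Multiset ℕ) :=
  fullCycleType_formPerm_of_length_eq_five (by decide) rfl

theorem fullCycleType_σ3 : fullCycleType σ3 = ({1, 1, 1, 5} : Multiset ℕ) :=
  fullCycleType_formPerm_of_length_eq_five (by decide) rfl

theorem fullCycleType_σ4 : fullCycleType σ4 = ({1, 1, 1, 5} : Multiset ℕ) :=
  fullCycleType_formPerm_of_length_eq_five (by decide) rfl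

theorem seqProd_σ1_σ2_σ3_σ4 : seqProd [σ1, σ2, σ3, σ4] = Equiv.refl (Fin 8) := by
  decide

theorem Subgroup.exists_mem_apply_eq_of_forall_exists_apply_eq {α : Type*}
    {H : Subgroup (Perm α)} (a : α) (h : ∀ x, ∃ g ∈ H, g a = x) (x y : α) :
    ∃ g ∈ H, g x = y := by
  obtain ⟨g, hg, rfl⟩ := h x
  obtain ⟨k, hk, rfl⟩ := h y
  exact ⟨k * g⁻¹, mul_mem hk (inv_mem hg), by simp⟩

-- `σ1` moves `0` through `1, …, 4`; then `σ2` maps `2 ↦ 5 ↦ 7` and `σ3` maps `3 ↦ 6`.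
def wordFromZero : Fin 8 → Perm (Fin 8) :=
  ![1, σ1, σ1 ^ 2, σ1 ^ 3, σ1 ^ 4, σ2 * σ1 ^ 2, σ3 * σ1 ^ 3, σ2 ^ 2 * σ1 ^ 2]

theorem wordFromZero_apply_zero : ∀ x, wordFromZero x 0 = x := by
  decide

theorem wordFromZero_mem_closure {S : Set (Perm (Fin 8))} (h1 : σ1 ∈ S) (h2 : σ2 ∈ S)
    (h3 : σ3 ∈ S) (x : Fin 8) : wordFromZero x ∈ Subgroup.closure S := by
  have m1 := Subgroup.subset_closure h1
  have m2 := Subgroup.subset_closure h2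
  have m3 := Subgroup.subset_closure h3
  fin_cases x
  · exact one_mem _
  · exact m1
  · exact pow_mem m1 2
  · exact pow_mem m1 3
  · exact pow_mem m1 4
  · exact mul_mem m2 (pow_mem m1 2)
  · exact mul_mem m3 (pow_mem m1 3)
  · exact mul_mem (pow_mem m2 2) (pow_mem m1 2)

theorem exists_mem_closure_apply_eq_of_σ1_σ2_σ3_mem {S : Set (Perm (Fin 8))} (h1 : σ1 ∈ S)
    (h2 : σ2 ∈ S) (h3 : σ3 ∈ S) (x y : Fin 8) : ∃ g ∈ Subgroup.closure S, g x = y :=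
  Subgroup.exists_mem_apply_eq_of_forall_exists_apply_eq 0
    (fun z => ⟨wordFromZero z, wordFromZero_mem_closure h1 h2 h3 z, wordFromZero_apply_zero z⟩)
    x y

theorem stmt11 :
    (fullCycleType σ1 = ({1, 1, 1, 5} : Multiset ℕ) ∧ fullCycleType σ2 = ({1, 1, 1, 5} : Multiset ℕ) ∧ fullCycleType σ3 = ({1, 1, 1, 5} : Multiset ℕ) ∧ fullCycleType σ4 = ({1, 1, 1, 5} : Multiset ℕ)) ∧
    seqProd [σ1, σ2, σ3, σ4] = Equiv.refl (Fin 8) ∧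
    (∀ x y : Fin 8, ∃ g ∈ Subgroup.closure ({σ1, σ2, σ3, σ4} : Set (Equiv.Perm (Fin 8))), g x = y) ∧
    (∃ τ : Fin 4 → Equiv.Perm (Fin 8),
      (∀ i, fullCycleType (τ i) = ({1, 1, 1, 5} : Multiset ℕ)) ∧
      seqProd (List.ofFn τ) = Equiv.refl (Fin 8) ∧
      (∀ x y : Fin 8, ∃ g ∈ Subgroup.closure (Set.range τ), g x = y)) := by
  refine ⟨⟨fullCycleType_σ1, fullCycleType_σ2, fullCycleType_σ3, fullCycleType_σ4⟩,
    seqProd_σ1_σ2_σ3_σ4, exists_mem_closure_apply_eq_of_σ1_σ2_σ3_mem (by simp) (by simp) (by simp),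
    ![σ1, σ2, σ3, σ4], fun i => ?_, seqProd_σ1_σ2_σ3_σ4,
    exists_mem_closure_apply_eq_of_σ1_σ2_σ3_mem ⟨0, rfl⟩ ⟨1, rfl⟩ ⟨2, rfl⟩⟩
  fin_cases i
  exacts [fullCycleType_σ1, fullCycleType_σ2, fullCycleType_σ3, fullCycleType_σ4]
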